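/- arXiv:2202.09853 — 2 statements merged into one kernel-verified Lean document; each statement's English description precedes it below -/
import Mathlib

section
/- Let N >= 2, let M be a matching of K_N, let e = uv be an edge of K_N with M ∪ {e} also a matching, let G = K_N△M and G' = K_N△(M ∪ {e}) with new vertex w. Let d be a D(G')-draconian sequence with d_w = 0. Then at least one of d_u, d_v is positive, and subtracting 1 from a positive one among d_u, d_v and deleting coordinate w yields a D(G)-draconian sequence. -/
/-- `c : V → ℕ` is a `D(H)`-draconian sequence for the simple graph `H` on `V`:
the entries sum to `|V| - 1` and, for every nonempty `S ⊆ V`, the partial sum over `S`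
is strictly less than the size of `⋃_{i ∈ S} N_{D(H)}(i)`, where
`N_{D(H)}(i) = {ī} ∪ {j̄ : ij ∈ E(H)}`. -/
def DraconianD {V : Type*} [Fintype V] (H : SimpleGraph V) (c : V → ℕ) : Prop :=
  (∑ v, c v) = Fintype.card V - 1 ∧
    ∀ S : Finset V, S.Nonempty →
      (∑ i ∈ S, c i) < ((S : Set V) ∪ ⋃ i ∈ S, H.neighborSet i).ncard

/-- `G △ e` for `e = uv`: add a new vertex (`none`) adjacent to exactly `u` and `v`. -/
def triExt {V : Type*} (G : SimpleGraph V) (u v : V) : SimpleGraph (Option V) :=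
  SimpleGraph.fromRel fun a b =>
    (∃ x y, a = some x ∧ b = some y ∧ G.Adj x y) ∨ (a = none ∧ (b = some u ∨ b = some v))

/-- `K_N △ 𝓜` for a matching `𝓜` with `M` edges `{f i, g i}`: the complete graph on
`Fin N` (the `inl` vertices) together with, for each `i : Fin M`, a new vertex `inr i`
adjacent to exactly `f i` and `g i`. -/
def MatchTri (N M : ℕ) (f g : Fin M → Fin N) : SimpleGraph (Fin N ⊕ Fin M) :=
  SimpleGraph.fromRel fun a b =>
    (∃ x y : Fin N, a = Sum.inl x ∧ b = Sum.inl y ∧ x ≠ y) ∨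
    (∃ i : Fin M, a = Sum.inr i ∧ (b = Sum.inl (f i) ∨ b = Sum.inl (g i)))


/-!
Write `N[S]` for the closed neighbourhood of `S`, so that the draconian condition reads
`∑_{S} c < |N[S]|`. The vertices `u` and `v` are unmatched, so both are adjacent to exactly the
other vertices of `K_N`: they are closed twins, `N[u] = N[v]`, and this is all the argument uses
about `G`.

Positivity: the complement of `N_{G'}[w] = {w, u, v}` has a closed neighbourhood missing `w`, so
it carries weight less than the total `|V(G')| - 1`; hence `d_w + d_u + d_v > 0`.

Reduction, with `c = d - 1_u`: a set `T` of old vertices avoiding `u` and `v` has the same closed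
neighbourhood in `G'` as in `G`. If `T` meets `{u, v}`, apply the inequality of `G'` to
`T ∪ {u, w}`; by the twin property its closed neighbourhood is `N_G[T] ∪ {w}`, and the extra unit
is paid for by `c_u = d_u - 1`.
-/

namespace SimpleGraph

variable {V : Type*}

def closedNbhd (H : SimpleGraph V) (s : Set V) : Set V :=
  s ∪ ⋃ i ∈ s, H.neighborSet i

variable {H : SimpleGraph V} {s t : Set V} {x : V}

lemma mem_closedNbhd : x ∈ H.closedNbhd s ↔ ∃ i ∈ s, i = x ∨ H.Adj i x := by
  simp only [closedNbhd, Set.mem_union, Set.mem_iUnion₂, mem_neighborSet, exists_prop]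
  constructor
  · rintro (hx | ⟨i, hi, hix⟩)
    exacts [⟨x, hx, Or.inl rfl⟩, ⟨i, hi, Or.inr hix⟩]
  · rintro ⟨i, hi, rfl | hix⟩
    exacts [Or.inl hi, Or.inr ⟨i, hi, hix⟩]

lemma self_mem_closedNbhd_singleton : x ∈ H.closedNbhd {x} :=
  mem_closedNbhd.2 ⟨x, rfl, Or.inl rfl⟩

lemma closedNbhd_mono (h : s ⊆ t) : H.closedNbhd s ⊆ H.closedNbhd t := fun _ hy =>
  let ⟨i, hi, hiy⟩ := mem_closedNbhd.1 hy
  mem_closedNbhd.2 ⟨i, h hi, hiy⟩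

lemma closedNbhd_insert (a : V) (s : Set V) :
    H.closedNbhd (insert a s) = H.closedNbhd {a} ∪ H.closedNbhd s := by
  ext y
  simp only [Set.mem_union, mem_closedNbhd, Set.mem_insert_iff, Set.mem_singleton_iff]
  aesop

end SimpleGraph

open SimpleGraph

section Draconian

variable {V : Type*} [Fintype V] {H : SimpleGraph V} {c : V → ℕ}

lemma draconianD_iff : DraconianD H c ↔ (∑ v, c v) = Fintype.card V - 1 ∧
    ∀ S : Finset V, S.Nonempty → (∑ i ∈ S, c i) < (H.closedNbhd S).ncard :=
  Iff.rfl

lemma DraconianD.sum_pos_of_closedNbhd_subset [Nontrivial V] (hc : DraconianD H c) {x : V}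
    {A : Finset V} (hA : H.closedNbhd {x} ⊆ A) : 0 < ∑ i ∈ A, c i := by
  classical
  obtain ⟨htotal, hlt⟩ := draconianD_iff.1 hc
  have hsplit := Finset.sum_add_sum_compl A c
  rcases (Aᶜ).eq_empty_or_nonempty with hempty | hne
  · rw [hempty, Finset.sum_empty] at hsplit
    have := Fintype.one_lt_card (α := V)
    omega
  · have hx : x ∉ H.closedNbhd (Aᶜ : Finset V) := by
      intro hmem
      obtain ⟨i, hi, rfl | hix⟩ := mem_closedNbhd.1 hmem
      · exact Finset.mem_compl.1 hi (hA self_mem_closedNbhd_singleton)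
      · exact Finset.mem_compl.1 hi (hA (mem_closedNbhd.2 ⟨x, rfl, Or.inr hix.symm⟩))
    have hcard : (H.closedNbhd (Aᶜ : Finset V)).ncard ≤ Fintype.card V - 1 := by
      have := Set.ncard_le_ncard (Set.subset_compl_singleton_iff.2 hx)
      rwa [Set.ncard_compl, Set.ncard_singleton, Nat.card_eq_fintype_card] at this
    have := hlt _ hne
    omega

end Draconian

section TriExt

variable {V : Type*} {G : SimpleGraph V} {u v : V}

lemma triExt_adj_some {a b : V} : (triExt G u v).Adj (some a) (some b) ↔ G.Adj a b := by
  simp only [triExt, fromRel_adj]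
  constructor
  · rintro ⟨-, (⟨x, y, hx, hy, h⟩ | ⟨⟨⟩, -⟩) | (⟨x, y, hx, hy, h⟩ | ⟨⟨⟩, -⟩)⟩ <;>
      simp only [Option.some_inj] at hx hy <;> subst hx hy
    exacts [h, h.symm]
  · exact fun h => ⟨by simpa using h.ne, Or.inl (Or.inl ⟨a, b, rfl, rfl, h⟩)⟩

lemma triExt_adj_none {b : Option V} : (triExt G u v).Adj none b ↔ b = some u ∨ b = some v := by
  simp only [triExt, fromRel_adj]
  aesop

lemma triExt_comm (G : SimpleGraph V) (u v : V) : triExt G u v = triExt G v u := by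
  ext a b
  simp only [triExt, fromRel_adj, or_comm (a := b = some u), or_comm (a := a = some u)]

lemma closedNbhd_triExt_none_subset :
    (triExt G u v).closedNbhd {none} ⊆ {none, some u, some v} := by
  intro y hy
  obtain ⟨i, rfl, rfl | hadj⟩ := mem_closedNbhd.1 hy
  · exact Or.inl rfl
  · exact Or.inr (triExt_adj_none.1 hadj)

lemma closedNbhd_triExt_image_some {s : Set V} (hu : u ∉ s) (hv : v ∉ s) :
    (triExt G u v).closedNbhd (some '' s) = some '' G.closedNbhd s := by
  ext (_ | y)
  · simp only [mem_closedNbhd, Set.mem_image, exists_exists_and_eq_and, reduceCtorEq, false_or,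
      and_false, exists_false, iff_false, not_exists, not_and]
    intro x hx h
    rcases triExt_adj_none.1 h.symm with h | h <;> obtain rfl := Option.some_injective _ h
    exacts [hu hx, hv hx]
  · simp [mem_closedNbhd, triExt_adj_some]

lemma closedNbhd_triExt_insert_none (s : Set V) :
    (triExt G u v).closedNbhd (insert none (some '' s)) =
      insert none (some '' (G.closedNbhd s ∪ {u, v})) := by
  ext (_ | y)
  · simpa using mem_closedNbhd.2 ⟨none, Set.mem_insert _ _, Or.inl rfl⟩
  · simp [mem_closedNbhd, triExt_adj_some, triExt_adj_none, or_assoc]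

end TriExt

lemma SimpleGraph.closedNbhd_insert_union_pair_subset {V : Type*} {G : SimpleGraph V} {u v : V}
    {s : Set V} (htwin : G.closedNbhd {u} = G.closedNbhd {v}) (h : u ∈ s ∨ v ∈ s) :
    G.closedNbhd (insert u s) ∪ {u, v} ⊆ G.closedNbhd s := by
  have hsub : G.closedNbhd {u} ⊆ G.closedNbhd s := by
    rcases h with h | h
    · exact closedNbhd_mono (Set.singleton_subset_iff.2 h)
    · exact htwin ▸ closedNbhd_mono (Set.singleton_subset_iff.2 h)
  rw [closedNbhd_insert]
  refine Set.union_subset (Set.union_subset hsub le_rfl) (Set.insert_subset ?_ ?_)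
  · exact hsub self_mem_closedNbhd_singleton
  · exact Set.singleton_subset_iff.2 (hsub (htwin ▸ self_mem_closedNbhd_singleton))

lemma Finset.sum_tsub_ite_add_one {ι : Type*} [DecidableEq ι] {T : Finset ι} {d : ι → ℕ} {u : ι}
    (huT : u ∈ T) (hu : 0 < d u) : ∑ x ∈ T, (d x - if x = u then 1 else 0) + 1 = ∑ x ∈ T, d x := by
  have hle : ∀ x ∈ T, (if x = u then 1 else 0) ≤ d x := by
    intro x _
    split_ifs with h
    exacts [h ▸ hu, Nat.zero_le _]
  have hpos : d u ≤ ∑ x ∈ T, d x := Finset.single_le_sum (fun _ _ => Nat.zero_le _) huT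
  rw [Finset.sum_tsub_distrib _ hle, Finset.sum_ite_eq' T u, if_pos huT]
  omega

section Draconian

variable {V : Type*} [Fintype V] [DecidableEq V] {G : SimpleGraph V} {u v : V} {d : Option V → ℕ}

lemma DraconianD.pos_of_triExt [Nonempty V] (hd : DraconianD (triExt G u v) d) :
    0 < d none ∨ 0 < d (some u) ∨ 0 < d (some v) := by
  have hpos := hd.sum_pos_of_closedNbhd_subset (A := {none, some u, some v})
    (by simpa using closedNbhd_triExt_none_subset)
  by_contra! h
  refine hpos.ne' (Finset.sum_eq_zero fun x hx => ?_)
  simp only [Finset.mem_insert, Finset.mem_singleton] at hx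
  rcases hx with rfl | rfl | rfl <;> omega

theorem DraconianD.of_triExt (htwin : G.closedNbhd {u} = G.closedNbhd {v})
    (hd : DraconianD (triExt G u v) d) (h0 : d none = 0) (hu : 0 < d (some u)) :
    DraconianD G (fun x => d (some x) - if x = u then 1 else 0) := by
  obtain ⟨htotal, hlt⟩ := draconianD_iff.1 hd
  have hcard : ∑ x, d (some x) = Fintype.card V := by
    rw [Fintype.sum_option, h0, Fintype.card_option] at htotal
    omega
  refine draconianD_iff.2 ⟨?_, fun T hT => ?_⟩
  · have := Finset.sum_tsub_ite_add_one (d := fun x => d (some x)) (Finset.mem_univ u) hu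
    omega
  by_cases huvT : u ∈ T ∨ v ∈ T
  · have hS := hlt (insert none ((insert u T).image some)) (Finset.insert_nonempty _ _)
    rw [Finset.sum_insert (by simp), h0, zero_add, Finset.sum_image (by simp), Finset.coe_insert,
      Finset.coe_image, closedNbhd_triExt_insert_none] at hS
    have hN : (insert none (some '' (G.closedNbhd ↑(insert u T) ∪ {u, v}))).ncard ≤
        (G.closedNbhd T).ncard + 1 := by
      refine (Set.ncard_insert_le _ _).trans (Nat.add_le_add_right ?_ 1)
      rw [Set.ncard_image_of_injective _ (Option.some_injective V)]
      exact Set.ncard_le_ncard (by simpa using closedNbhd_insert_union_pair_subset htwin huvT)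
    have hu' := Finset.sum_tsub_ite_add_one (d := fun x => d (some x)) (T.mem_insert_self u) hu
    have hmono := Finset.sum_le_sum_of_subset (f := fun x => d (some x) - if x = u then 1 else 0)
      (T.subset_insert u)
    omega
  · obtain ⟨huT, hvT⟩ := not_or.1 huvT
    have hS := hlt (T.image some) (hT.image _)
    rw [Finset.sum_image (by simp), Finset.coe_image, closedNbhd_triExt_image_some huT hvT,
      Set.ncard_image_of_injective _ (Option.some_injective V)] at hS
    have hle : ∑ x ∈ T, (d (some x) - if x = u then 1 else 0) ≤ ∑ x ∈ T, d (some x) :=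
      Finset.sum_le_sum fun _ _ => tsub_le_self
    omega

end Draconian

lemma closedNbhd_matchTri_inl {N M : ℕ} {f g : Fin M → Fin N} {u : Fin N}
    (hu : ∀ i, u ≠ f i ∧ u ≠ g i) :
    (MatchTri N M f g).closedNbhd {Sum.inl u} = Set.range Sum.inl := by
  ext (y | i)
  · simp [mem_closedNbhd, MatchTri, eq_comm, em]
  · simp [mem_closedNbhd, MatchTri, hu]

theorem stmt8_general (N M : ℕ) (f g : Fin M → Fin N)
    (u v : Fin N)
    (hdisj : ∀ i : Fin M, u ≠ f i ∧ u ≠ g i ∧ v ≠ f i ∧ v ≠ g i)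
    (d : Option (Fin N ⊕ Fin M) → ℕ)
    (hd : DraconianD (triExt (MatchTri N M f g) (Sum.inl u) (Sum.inl v)) d)
    (h0 : d none = 0) :
    (0 < d (some (Sum.inl u)) ∨ 0 < d (some (Sum.inl v))) ∧
      (0 < d (some (Sum.inl u)) →
        DraconianD (MatchTri N M f g)
          (fun x => d (some x) - if x = Sum.inl u then 1 else 0)) ∧
      (0 < d (some (Sum.inl v)) →
        DraconianD (MatchTri N M f g)
          (fun x => d (some x) - if x = Sum.inl v then 1 else 0)) := by
  have htwin : (MatchTri N M f g).closedNbhd {Sum.inl u} =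
      (MatchTri N M f g).closedNbhd {Sum.inl v} :=
    (closedNbhd_matchTri_inl fun i => ⟨(hdisj i).1, (hdisj i).2.1⟩).trans
      (closedNbhd_matchTri_inl fun i => ⟨(hdisj i).2.2.1, (hdisj i).2.2.2⟩).symm
  have : Nonempty (Fin N ⊕ Fin M) := ⟨Sum.inl u⟩
  refine ⟨?_, hd.of_triExt htwin h0, (triExt_comm _ _ _ ▸ hd).of_triExt htwin.symm h0⟩
  simpa [h0] using hd.pos_of_triExt

/-- With `G = K_N △ 𝓜`, `e = uv` disjoint from the matching, and
`G' = K_N △ (𝓜 ∪ {e})` (new vertex `w = none`): if `d` is a `D(G')`-draconian sequence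
with `d w = 0`, then at least one of `d u`, `d v` is positive, and subtracting `1` from a
positive one among them and deleting coordinate `w` yields a `D(G)`-draconian sequence. -/
theorem stmt8 (N M : ℕ) (hN : 2 ≤ N) (f g : Fin M → Fin N)
    (hmatch : Function.Injective (Sum.elim f g : Fin M ⊕ Fin M → Fin N))
    (u v : Fin N) (huv : u ≠ v)
    (hdisj : ∀ i : Fin M, u ≠ f i ∧ u ≠ g i ∧ v ≠ f i ∧ v ≠ g i)
    (d : Option (Fin N ⊕ Fin M) → ℕ)
    (hd : DraconianD (triExt (MatchTri N M f g) (Sum.inl u) (Sum.inl v)) d)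
    (h0 : d none = 0) :
    (0 < d (some (Sum.inl u)) ∨ 0 < d (some (Sum.inl v))) ∧
      (0 < d (some (Sum.inl u)) →
        DraconianD (MatchTri N M f g)
          (fun x => d (some x) - if x = Sum.inl u then 1 else 0)) ∧
      (0 < d (some (Sum.inl v)) →
        DraconianD (MatchTri N M f g)
          (fun x => d (some x) - if x = Sum.inl v then 1 else 0)) :=
  stmt8_general N M f g u v hdisj d hd h0
end

section
/- Let N >= 5, let C be an M-cycle in K_N with M ≠ 4, 3 <= M <= N, and let G = K_N minus the edges of C. If c is a D(K_N)-draconian sequence with at least three nonzero entries, then c is also a D(G)-draconian sequence. -/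
section AuxFin
variable {M : ℕ} [NeZero M]

lemma aux_one (hM3 : 3 ≤ M) : (1 : Fin M) ≠ 0 := by
  obtain ⟨M', rfl⟩ : ∃ M', M = M' + 3 := ⟨M - 3, by omega⟩
  intro h
  have := congrArg Fin.val h
  simp at this

lemma aux_self_add (hM3 : 3 ≤ M) (i : Fin M) : i ≠ i + 1 := fun h =>
  aux_one hM3 (left_eq_add.mp h)

lemma aux_self_sub (hM3 : 3 ≤ M) (i : Fin M) : i ≠ i - 1 := fun h =>
  aux_one hM3 (add_eq_left.mp (eq_sub_iff_add_eq.mp h))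

lemma aux_sub_add (i : Fin M) : i - 1 + 1 = i := sub_add_cancel i 1

lemma aux_add_sub (i : Fin M) : i + 1 - 1 = i := add_sub_cancel_right i 1

lemma aux_sub_inj {i j : Fin M} (h : i - 1 = j - 1) : i = j := by
  have := congrArg (· + 1) h
  simpa [aux_sub_add] using this

lemma aux_four (hM3 : 3 ≤ M) (hM4 : M ≠ 4) {i j : Fin M}
    (h1 : i - 1 = j + 1) (h2 : i + 1 = j - 1) : False := by
  obtain ⟨M', rfl⟩ : ∃ M', M = M' + 3 := ⟨M - 3, by omega⟩
  have hi : i = j + 1 + 1 := by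
    have := congrArg (· + 1) h1
    simpa [sub_add_cancel] using this
  have hj : j = i + 1 + 1 := by
    have := congrArg (· + 1) h2.symm
    simpa [sub_add_cancel] using this
  rw [hj] at hi
  have h0 : (1 + 1 + 1 + 1 : Fin (M' + 3)) = 0 := by
    have : i + (1 + 1 + 1 + 1) = i + 0 := by rw [add_zero]; simp only [← add_assoc]; exact hi.symm
    exact add_left_cancel this
  have hval := congrArg Fin.val h0
  rw [Fin.val_add, Fin.val_add, Fin.val_add] at hval
  simp [Fin.val_one, Nat.mod_add_mod, Fin.val_zero] at hval
  have hdvd : (M' + 3) ∣ 4 := Nat.dvd_of_mod_eq_zero (by omega)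
  have hle := Nat.le_of_dvd (by norm_num) hdvd
  have : M' ≤ 1 := by omega
  interval_cases M' <;> omega

end AuxFin


/-- `K_N` minus the edges of the `M`-cycle with vertices `v 0, …, v (M-1)` (cyclically
adjacent). -/
def cycleRemoved (N M : ℕ) [NeZero M] (v : Fin M → Fin N) : SimpleGraph (Fin N) :=
  (⊤ : SimpleGraph (Fin N)) \
    SimpleGraph.fromRel fun a b => ∃ i : Fin M, a = v i ∧ b = v (i + 1)

/-- `𝒳(C_M) = {(N-2)·e_{v i} + e_j : i ∈ Fin M, j ∈ [N]}`. -/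
def setX (N M : ℕ) (v : Fin M → Fin N) : Set (Fin N → ℕ) :=
  {c | ∃ (i : Fin M) (j : Fin N),
    c = fun x => (if x = v i then N - 2 else 0) + (if x = j then 1 else 0)}

/-- `𝒴(C_M) = {r·e_{v i} + (N-1-r)·e_{v (i+2)} : i ∈ Fin M, 2 ≤ r ≤ N-3}`. -/
def setY (N M : ℕ) [NeZero M] (v : Fin M → Fin N) : Set (Fin N → ℕ) :=
  {c | ∃ (i : Fin M) (r : ℕ), 2 ≤ r ∧ r ≤ N - 3 ∧
    c = fun x => (if x = v i then r else 0) + (if x = v (i + 2) then N - 1 - r else 0)}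

/-- `𝒵(C_M) = {r·e_{v i} + (N-2-r)·e_{v (i+2)} + e_s : i ∈ Fin M, 1 ≤ r ≤ N-3,`
`s ∉ {v i, v (i+2)}}`. -/
def setZ (N M : ℕ) [NeZero M] (v : Fin M → Fin N) : Set (Fin N → ℕ) :=
  {c | ∃ (i : Fin M) (r : ℕ) (s : Fin N), 1 ≤ r ∧ r ≤ N - 3 ∧ s ≠ v i ∧ s ≠ v (i + 2) ∧
    c = fun x => (if x = v i then r else 0) +
      (if x = v (i + 2) then N - 2 - r else 0) + (if x = s then 1 else 0)}

/-- If `M ≠ 4` and `c` is a `D(K_N)`-draconian sequence with at least three nonzero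
entries, then `c` is also a `D(K_N \ E(C_M))`-draconian sequence. -/
theorem stmt19 (N M : ℕ) [NeZero M] (hN : 5 ≤ N) (hM3 : 3 ≤ M) (hMN : M ≤ N)
    (hM4 : M ≠ 4) (v : Fin M → Fin N) (hv : Function.Injective v)
    (c : Fin N → ℕ) (hc : DraconianD (⊤ : SimpleGraph (Fin N)) c)
    (h3 : 3 ≤ (Finset.univ.filter fun x => c x ≠ 0).card) :
    DraconianD (cycleRemoved N M v) c := by
  refine ⟨hc.1, ?_⟩
  intro S hS
  have hAdj : ∀ a b : Fin N, (cycleRemoved N M v).Adj a b ↔ a ≠ b ∧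
      (¬ ∃ i : Fin M, a = v i ∧ b = v (i+1)) ∧ (¬ ∃ i : Fin M, b = v i ∧ a = v (i+1)) := by
    intro a b
    simp only [cycleRemoved, SimpleGraph.sdiff_adj, SimpleGraph.top_adj, SimpleGraph.fromRel_adj]
    constructor
    · rintro ⟨hne, hnot⟩
      exact ⟨hne, fun h => hnot ⟨hne, Or.inl h⟩, fun h => hnot ⟨hne, Or.inr h⟩⟩
    · rintro ⟨hne, h1, h2⟩
      exact ⟨hne, fun h => h.2.elim h1 h2⟩
  -- the key sum bound
  have hkey : ∑ i ∈ S, c i + (3 - S.card) ≤ N - 1 := by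
    have h1 : ∑ i ∈ S, c i + ∑ i ∈ Sᶜ, c i = N - 1 := by
      rw [Finset.sum_add_sum_compl]
      simpa [Fintype.card_fin] using hc.1
    set F := Finset.univ.filter fun x => c x ≠ 0 with hF
    have h2 : (F \ S).card ≤ ∑ i ∈ Sᶜ, c i := by
      calc (F \ S).card = ∑ _i ∈ F \ S, 1 := by simp
        _ ≤ ∑ i ∈ F \ S, c i := Finset.sum_le_sum (fun i hi => by
            have := (Finset.mem_sdiff.mp hi).1
            rw [hF, Finset.mem_filter] at this
            omega)
        _ ≤ ∑ i ∈ Sᶜ, c i := Finset.sum_le_sum_of_subset (fun i hi => by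
            rw [Finset.mem_compl]
            exact (Finset.mem_sdiff.mp hi).2)
    have h4 := Finset.le_card_sdiff S F
    omega
  have hSpos : 1 ≤ S.card := Finset.card_pos.mpr hS
  by_cases hSv : ∀ x ∈ S, x ∈ Set.range v
  · -- all of S lies on the cycle
    set A : Set (Fin N) := {y | ∀ i : Fin M, v i ∈ S → (y = v (i-1) ∨ y = v (i+1))} with hA
    have hTsub : Set.univ \ A ⊆ ((S : Set (Fin N)) ∪ ⋃ i ∈ S, (cycleRemoved N M v).neighborSet i) := by
      rintro y ⟨-, hyA⟩
      rw [hA, Set.mem_setOf_eq] at hyA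
      push_neg at hyA
      obtain ⟨i, hiS, hy1, hy2⟩ := hyA
      by_cases hyv : y = v i
      · exact Or.inl (by rw [hyv]; exact hiS)
      · refine Or.inr (Set.mem_biUnion hiS ?_)
        rw [SimpleGraph.mem_neighborSet, hAdj]
        refine ⟨fun h => hyv h.symm, ?_, ?_⟩
        · rintro ⟨t, ht, hyt⟩
          exact hy2 (by rw [hyt, hv ht.symm])
        · rintro ⟨t, hyt, ht⟩
          have : t = i - 1 := by
            have := hv ht
            rw [this, aux_add_sub]
          exact hy1 (by rw [hyt, this])
    have hle : (Set.univ \ A).ncard ≤ ((S : Set (Fin N)) ∪ ⋃ i ∈ S, (cycleRemoved N M v).neighborSet i).ncard :=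
      Set.ncard_le_ncard hTsub (Set.toFinite _)
    have hdiff : (Set.univ \ A).ncard = N - A.ncard := by
      rw [Set.ncard_diff (Set.subset_univ A), Set.ncard_univ, Nat.card_eq_fintype_card,
        Fintype.card_fin]
    have hAN : A.ncard ≤ N := by
      have := Set.ncard_le_ncard (Set.subset_univ A) Set.finite_univ
      simpa [Set.ncard_univ, Nat.card_eq_fintype_card] using this
    by_cases hc3 : 3 ≤ S.card
    · -- |S| ≥ 3 : A is empty
      have hA0 : A = ∅ := by
        rw [Set.eq_empty_iff_forall_notMem]
        intro y hy
        obtain ⟨x1, hx1⟩ := hS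
        have e1 : 1 < (S.erase x1).card := by
          rw [Finset.card_erase_of_mem hx1]; omega
        obtain ⟨x2, hx2, x3, hx3, h23⟩ := Finset.one_lt_card.mp e1
        obtain ⟨h21, hx2S⟩ := Finset.mem_erase.mp hx2
        obtain ⟨h31, hx3S⟩ := Finset.mem_erase.mp hx3
        obtain ⟨i1, rfl⟩ := hSv x1 hx1
        obtain ⟨i2, rfl⟩ := hSv x2 hx2S
        obtain ⟨i3, rfl⟩ := hSv x3 hx3S
        have hi12 : i1 ≠ i2 := fun h => h21 (congrArg v h).symm
        have hi13 : i1 ≠ i3 := fun h => h31 (congrArg v h).symm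
        have hi23 : i2 ≠ i3 := fun h => h23 (congrArg v h)
        rw [hA, Set.mem_setOf_eq] at hy
        obtain ⟨t, hyt, e1'⟩ : ∃ t : Fin M, y = v t ∧ (i1 = t + 1 ∨ i1 = t - 1) := by
          rcases hy i1 hx1 with h | h
          · exact ⟨i1 - 1, h, Or.inl (aux_sub_add i1).symm⟩
          · exact ⟨i1 + 1, h, Or.inr (aux_add_sub i1).symm⟩
        have conv : ∀ k : Fin M, y = v (k - 1) ∨ y = v (k + 1) → k = t + 1 ∨ k = t - 1 := by
          intro k hk
          rcases hk with h | h
          · left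
            have : t = k - 1 := hv (hyt.symm.trans h)
            rw [this, aux_sub_add]
          · right
            have : t = k + 1 := hv (hyt.symm.trans h)
            rw [this, aux_add_sub]
        have e2' := conv i2 (hy i2 hx2S)
        have e3' := conv i3 (hy i3 hx3S)
        rcases e1' with h1 | h1 <;> rcases e2' with h2 | h2 <;> rcases e3' with h3 | h3 <;>
          simp_all
      have hA0' : A.ncard = 0 := by rw [hA0]; exact Set.ncard_empty _
      omega
    · by_cases hc2 : S.card = 2
      · -- |S| = 2 : A is a subsingleton
        have h2lt : 1 < S.card := by omega
        obtain ⟨x1, hx1, x2, hx2, h12⟩ := Finset.one_lt_card.mp h2lt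
        obtain ⟨i1, rfl⟩ := hSv x1 hx1
        obtain ⟨i2, rfl⟩ := hSv x2 hx2
        have hi12 : i1 ≠ i2 := fun h => h12 (congrArg v h)
        have hsub : A.Subsingleton := by
          intro y hy z hz
          rw [hA, Set.mem_setOf_eq] at hy hz
          rcases hy i1 hx1 with h | h <;> rcases hz i1 hx1 with g | g
          · exact h.trans g.symm
          · rcases hy i2 hx2 with h' | h' <;> rcases hz i2 hx2 with g' | g'
            · exact h'.trans g'.symm
            · exact absurd (aux_sub_inj (hv (h.symm.trans h'))) hi12
            · exact absurd (aux_four hM3 hM4 (hv (h.symm.trans h'))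
                (hv (g.symm.trans g'))) not_false
            · exact h'.trans g'.symm
          · rcases hy i2 hx2 with h' | h' <;> rcases hz i2 hx2 with g' | g'
            · exact h'.trans g'.symm
            · exact absurd (aux_four hM3 hM4 (hv (g.symm.trans g'))
                (hv (h.symm.trans h'))) not_false
            · exact absurd (aux_sub_inj (hv (g.symm.trans g'))) hi12
            · exact h'.trans g'.symm
          · exact h.trans g.symm
        have hA1 : A.ncard ≤ 1 := by
          rcases Set.eq_empty_or_nonempty A with h | ⟨a, ha⟩
          · simp [h]
          · have : A ⊆ {a} := fun z hz => hsub hz ha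
            calc A.ncard ≤ ({a} : Set (Fin N)).ncard := Set.ncard_le_ncard this (Set.toFinite _)
              _ = 1 := Set.ncard_singleton a
        omega
      · -- |S| = 1
        have hc1 : S.card = 1 := by omega
        obtain ⟨x, hx⟩ := hS
        obtain ⟨i0, rfl⟩ := hSv x hx
        have hApair : A ⊆ {v (i0 - 1), v (i0 + 1)} := by
          intro y hy
          rw [hA, Set.mem_setOf_eq] at hy
          rcases hy i0 hx with h | h <;> simp [h]
        have hA2 : A.ncard ≤ 2 := by
          have h1 := Set.ncard_le_ncard hApair (Set.toFinite _)
          have h2 := Set.ncard_insert_le (v (i0 - 1)) ({v (i0 + 1)} : Set (Fin N))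
          rw [Set.ncard_singleton] at h2
          omega
        omega
  · -- some vertex of S is off the cycle: the union is everything
    push_neg at hSv
    obtain ⟨x, hxS, hxv⟩ := hSv
    have hT : ((S : Set (Fin N)) ∪ ⋃ i ∈ S, (cycleRemoved N M v).neighborSet i) = Set.univ := by
      apply Set.eq_univ_of_forall
      intro y
      by_cases hxy : y = x
      · exact Or.inl (by rw [hxy]; exact hxS)
      · refine Or.inr (Set.mem_biUnion hxS ?_)
        rw [SimpleGraph.mem_neighborSet, hAdj]
        refine ⟨fun h => hxy h.symm, ?_, ?_⟩
        · rintro ⟨t, ht, -⟩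
          exact hxv ⟨t, ht.symm⟩
        · rintro ⟨t, -, ht⟩
          exact hxv ⟨t + 1, ht.symm⟩
    rw [hT, Set.ncard_univ, Nat.card_eq_fintype_card, Fintype.card_fin]
    omega
end
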